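/- In the free associative ring A_3 = Z⟨x,y,z⟩, for positive integers s, q, r, the element T(s,q,r) = [z, z^{s-1} x^{q-1} y^{r-1} [x,y]], viewed in B_2 = L_2/L_3, satisfies gcd(s,q,r) · T(s,q,r) ∈ L_3(A_3). In particular, T(s,q,r) is a torsion element of B_2(A_3(Z)) of order dividing gcd(s,q,r). -/

import Mathlib

/-!
Write `φ a b` for the class of `[a, b]` modulo `L₃`. Since `[a, [u, v]] ∈ L₃`, the value
`φ a (u * v)` is invariant under cyclic rotation of `u * v`, and `φ` obeys the cyclic Leibniz
rule `φ (u * v) w = φ u (v * w) + φ v (w * u)`. With `P = z^(s-1) x^(q-1) y^(r-1)` one has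
`T = φ z (P [x,y]) = -φ P (z [x,y])`; expanding `φ P` letter by letter, the `x`- and `y`-letters
contribute nothing and each of the `s - 1` letters `z` contributes `T`, so `T = -(s - 1) • T`.
The cyclic symmetry `φ z (P [x,y]) = φ x (P [y,z]) = φ y (P [z,x])` gives `q • T = r • T = 0`
in the same way, hence `gcd(s, q, r) • T = 0`.
-/

variable {R : Type*} [Ring R]

variable (R) in
def tripleCommutatorSpan : AddSubgroup R :=
  AddSubgroup.closure {u | ∃ a b c : R, u = ⁅a, ⁅b, c⁆⁆}

lemma lie_lie_mem_tripleCommutatorSpan (a b c : R) : ⁅a, ⁅b, c⁆⁆ ∈ tripleCommutatorSpan R :=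
  AddSubgroup.subset_closure ⟨a, b, c, rfl⟩

/-- Elements of `B₂ = L₂/L₃` are represented in the larger quotient `R ⧸ L₃`, which contains
it, so torsion statements are the same in both. -/
def bracketMod (a b : R) : R ⧸ tripleCommutatorSpan R := (⁅a, b⁆ : R)

lemma bracketMod_eq_zero_iff {a b : R} : bracketMod a b = 0 ↔ ⁅a, b⁆ ∈ tripleCommutatorSpan R :=
  QuotientAddGroup.eq_zero_iff _

lemma bracketMod_add_right (a u v : R) :
    bracketMod a (u + v) = bracketMod a u + bracketMod a v := by
  unfold bracketMod
  rw [← QuotientAddGroup.mk_add]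
  congr 1
  simp only [Ring.lie_def]
  noncomm_ring

lemma bracketMod_sub_right (a u v : R) :
    bracketMod a (u - v) = bracketMod a u - bracketMod a v := by
  unfold bracketMod
  rw [← QuotientAddGroup.mk_sub]
  congr 1
  simp only [Ring.lie_def]
  noncomm_ring

lemma bracketMod_neg_right (a u : R) : bracketMod a (-u) = -bracketMod a u := by
  unfold bracketMod
  rw [← QuotientAddGroup.mk_neg]
  congr 1
  simp only [Ring.lie_def]
  noncomm_ring

lemma bracketMod_one_left (u : R) : bracketMod 1 u = 0 := by
  unfold bracketMod
  rw [Ring.lie_def, one_mul, mul_one, sub_self, QuotientAddGroup.mk_zero]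

lemma bracketMod_lie_right (a b c : R) : bracketMod a ⁅b, c⁆ = 0 :=
  bracketMod_eq_zero_iff.2 (lie_lie_mem_tripleCommutatorSpan a b c)

lemma bracketMod_mul_comm_right (a u v : R) : bracketMod a (u * v) = bracketMod a (v * u) := by
  rw [← sub_eq_zero, ← bracketMod_sub_right, ← Ring.lie_def, bracketMod_lie_right]

lemma bracketMod_mul_left (u v w : R) :
    bracketMod (u * v) w = bracketMod u (v * w) + bracketMod v (w * u) := by
  unfold bracketMod
  rw [← QuotientAddGroup.mk_add]
  congr 1
  simp only [Ring.lie_def]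
  noncomm_ring

lemma bracketMod_mul_lie_eq_neg (a w b c : R) :
    bracketMod a (w * ⁅b, c⁆) = -bracketMod w (a * ⁅b, c⁆) := by
  refine eq_neg_of_add_eq_zero_left ?_
  have key : ⁅a, w * ⁅b, c⁆⁆ + ⁅w, a * ⁅b, c⁆⁆ = ⁅w, ⁅a, ⁅b, c⁆⁆⁆ + ⁅a * w, ⁅b, c⁆⁆ := by
    simp only [Ring.lie_def]; noncomm_ring
  unfold bracketMod
  rw [← QuotientAddGroup.mk_add, QuotientAddGroup.eq_zero_iff, key]
  exact add_mem (lie_lie_mem_tripleCommutatorSpan _ _ _) (lie_lie_mem_tripleCommutatorSpan _ _ _)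

lemma bracketMod_mul_lie_self (a w b : R) : bracketMod a (w * ⁅a, b⁆) = 0 := by
  have key : ⁅a, w * ⁅a, b⁆⁆ = ⁅b, ⁅a, a * w⁆⁆ - ⁅a, ⁅b, a * w⁆⁆ - ⁅w, ⁅a, b * a⁆⁆ := by
    simp only [Ring.lie_def]; noncomm_ring
  rw [bracketMod_eq_zero_iff, key]
  exact sub_mem (sub_mem (lie_lie_mem_tripleCommutatorSpan _ _ _)
    (lie_lie_mem_tripleCommutatorSpan _ _ _)) (lie_lie_mem_tripleCommutatorSpan _ _ _)

lemma bracketMod_pow_mul_lie_self (i : ℕ) (a w b : R) :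
    bracketMod (a ^ i) (w * ⁅a, b⁆) = 0 := by
  induction i generalizing w with
  | zero => rw [pow_zero, bracketMod_one_left]
  | succ i ih =>
    rw [pow_succ', bracketMod_mul_left, ← mul_assoc, bracketMod_mul_lie_self, zero_add,
      bracketMod_mul_comm_right, ← mul_assoc, ih]

lemma bracketMod_pow_mul_lie_self' (j : ℕ) (a w b : R) :
    bracketMod (b ^ j) (w * ⁅a, b⁆) = 0 := by
  rw [show ⁅a, b⁆ = -⁅b, a⁆ from (neg_sub _ _).symm, mul_neg, bracketMod_neg_right,
    bracketMod_pow_mul_lie_self, neg_zero]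

lemma bracketMod_pow_mul_pow_mul_lie (i j : ℕ) (a w b : R) :
    bracketMod (a ^ i * b ^ j) (w * ⁅a, b⁆) = 0 := by
  rw [bracketMod_mul_left, ← mul_assoc, bracketMod_pow_mul_lie_self, zero_add,
    bracketMod_mul_comm_right, ← mul_assoc, bracketMod_pow_mul_lie_self']

lemma bracketMod_pow_mul_self (m : ℕ) (a u : R) :
    bracketMod (a ^ m) (u * a) = m • bracketMod a (a ^ m * u) := by
  induction m generalizing u with
  | zero => rw [pow_zero, bracketMod_one_left, zero_nsmul]
  | succ m ih =>
    have rotate : bracketMod a (a ^ m * (u * a)) = bracketMod a (a ^ (m + 1) * u) := by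
      rw [← mul_assoc, bracketMod_mul_comm_right, ← mul_assoc, ← pow_succ']
    rw [pow_succ', bracketMod_mul_left, ih, rotate, ← pow_succ', succ_nsmul']

lemma succ_nsmul_bracketMod_mul_pow_eq_zero (m : ℕ) (a L X u v : R)
    (hL : bracketMod L (a ^ m * X * a * ⁅u, v⁆) = 0)
    (hX : bracketMod X (L * a ^ (m + 1) * ⁅u, v⁆) = 0) :
    (m + 1) • bracketMod a (L * a ^ m * X * ⁅u, v⁆) = 0 := by
  set c := ⁅u, v⁆
  set T := bracketMod a (L * a ^ m * X * c)
  have expand : bracketMod (L * a ^ m * X) (a * c) =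
      bracketMod L (a ^ m * X * a * c) + bracketMod (a ^ m) (X * (a * c) * L) +
        bracketMod X (L * a ^ (m + 1) * c) := by
    rw [bracketMod_mul_left, bracketMod_mul_left, bracketMod_mul_comm_right X, pow_succ]
    simp only [mul_assoc]
  have hpow : bracketMod (a ^ m) (X * (a * c) * L) = m • T := by
    have hcomm : X * (a * c) * L = X * ⁅a, c * L⁆ + X * (c * L) * a := by
      simp only [Ring.lie_def]; noncomm_ring
    rw [hcomm, bracketMod_add_right, bracketMod_pow_mul_lie_self, zero_add,
      bracketMod_pow_mul_self, ← mul_assoc, ← mul_assoc, bracketMod_mul_comm_right a _ L]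
    simp only [T, mul_assoc]
  have hT : T = -(m • T) := calc
    T = -bracketMod (L * a ^ m * X) (a * c) := bracketMod_mul_lie_eq_neg _ _ _ _
    _ = -(m • T) := by rw [expand, hL, hX, hpow, zero_add, add_zero]
  rw [succ_nsmul', ← eq_neg_iff_add_eq_zero]
  exact hT

lemma bracketMod_mul_lie_cycle (P x y z : R) :
    bracketMod z (P * ⁅x, y⁆) = bracketMod x (P * ⁅y, z⁆) := by
  have key : z * ⁅x, y⁆ = x * ⁅y, z⁆ + ⁅z, x * y⁆ + ⁅x, z * y⁆ := by
    simp only [Ring.lie_def]; noncomm_ring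
  rw [bracketMod_mul_lie_eq_neg z P, bracketMod_mul_lie_eq_neg x P, key, bracketMod_add_right,
    bracketMod_add_right, bracketMod_lie_right, bracketMod_lie_right, add_zero, add_zero]

section Torsion

variable (s q r : ℕ) (x y z : R)

lemma succ_nsmul_bracketMod_pow_eq_zero_left :
    (s + 1) • bracketMod z (z ^ s * x ^ q * y ^ r * ⁅x, y⁆) = 0 := by
  have h := succ_nsmul_bracketMod_mul_pow_eq_zero s z 1 (x ^ q * y ^ r) x y
    (bracketMod_one_left _) (bracketMod_pow_mul_pow_mul_lie q r x _ y)
  simpa only [one_mul, mul_assoc] using h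

lemma succ_nsmul_bracketMod_pow_eq_zero_middle :
    (q + 1) • bracketMod z (z ^ s * x ^ q * y ^ r * ⁅x, y⁆) = 0 := by
  rw [bracketMod_mul_lie_cycle]
  exact succ_nsmul_bracketMod_mul_pow_eq_zero q x (z ^ s) (y ^ r) y z
    (bracketMod_pow_mul_lie_self' s y _ z) (bracketMod_pow_mul_lie_self r y _ z)

lemma succ_nsmul_bracketMod_pow_eq_zero_right :
    (r + 1) • bracketMod z (z ^ s * x ^ q * y ^ r * ⁅x, y⁆) = 0 := by
  rw [bracketMod_mul_lie_cycle, bracketMod_mul_lie_cycle]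
  have h := succ_nsmul_bracketMod_mul_pow_eq_zero r y (z ^ s * x ^ q) 1 z x
    (bracketMod_pow_mul_pow_mul_lie s q z _ x) (bracketMod_one_left _)
  simpa only [mul_one] using h

theorem gcd_nsmul_bracketMod_eq_zero :
    Nat.gcd (s + 1) (Nat.gcd (q + 1) (r + 1)) •
      bracketMod z (z ^ s * x ^ q * y ^ r * ⁅x, y⁆) = 0 := by
  rw [← addOrderOf_dvd_iff_nsmul_eq_zero]
  exact Nat.dvd_gcd (addOrderOf_dvd_of_nsmul_eq_zero (succ_nsmul_bracketMod_pow_eq_zero_left ..))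
    (Nat.dvd_gcd (addOrderOf_dvd_of_nsmul_eq_zero (succ_nsmul_bracketMod_pow_eq_zero_middle ..))
      (addOrderOf_dvd_of_nsmul_eq_zero (succ_nsmul_bracketMod_pow_eq_zero_right ..)))

end Torsion

/-- In `A_3 = ℤ⟨x,y,z⟩`, for positive `s,q,r`, the element
`T(s,q,r) = [z, z^{s-1} x^{q-1} y^{r-1} [x,y]]` satisfies
`gcd(s,q,r) · T(s,q,r) ∈ L_3(A_3)`, the additive span of triple commutators; so `T(s,q,r)`
is a torsion element of `B_2 = L_2/L_3` of order dividing `gcd(s,q,r)`. -/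
theorem stmt16 (s q r : ℕ) (hs : 0 < s) (hq : 0 < q) (hr : 0 < r) :
    let x := FreeAlgebra.ι ℤ (0 : Fin 3)
    let y := FreeAlgebra.ι ℤ (1 : Fin 3)
    let z := FreeAlgebra.ι ℤ (2 : Fin 3)
    let w := z ^ (s - 1) * x ^ (q - 1) * y ^ (r - 1) * (x * y - y * x)
    (Nat.gcd s (Nat.gcd q r) : ℤ) • (z * w - w * z) ∈
      AddSubgroup.closure
        {u : FreeAlgebra ℤ (Fin 3) | ∃ a b c, u = a * (b * c - c * b) - (b * c - c * b) * a} := by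
  obtain ⟨s, rfl⟩ := Nat.exists_eq_add_one.2 hs
  obtain ⟨q, rfl⟩ := Nat.exists_eq_add_one.2 hq
  obtain ⟨r, rfl⟩ := Nat.exists_eq_add_one.2 hr
  intro x y z w
  rw [← QuotientAddGroup.eq_zero_iff, natCast_zsmul]
  exact gcd_nsmul_bracketMod_eq_zero s q r x y z
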